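/- Let V : ℝ^n → ℝ be C¹ with V positive definite, and let b : ℝ^n → ℝ^{n×m} satisfy rank b(x) = n for all x. Define u_d(x) := −(λ/|∇V(x)|) b(x)⁺ ∇V(x) where b⁺ := bᵀ(b bᵀ)⁻¹. Then for any disturbance vector d with |d| < λ, at any point x with ∇V(x) ≠ 0 one has ∇V(x)ᵀ(b(x) u_d(x) + d) ≤ (|d| − λ)|∇V(x)| < 0. -/

import Mathlib

/-!
Because `b bᵀ` has the full rank of `b`, it is invertible and `b⁺ = bᵀ (b bᵀ)⁻¹` is a right
inverse of `b`. Hence `b u_d = -(λ / |∇V|) ∇V`, so `∇Vᵀ b u_d = -λ |∇V|`, while Cauchy–Schwarz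
gives `∇Vᵀ d ≤ |d| |∇V|`.
-/

open Matrix

noncomputable def euclNorm {n : ℕ} (v : Fin n → ℝ) : ℝ := Real.sqrt (v ⬝ᵥ v)

section EuclNorm

variable {n : ℕ}

lemma euclNorm_eq_norm (v : Fin n → ℝ) : euclNorm v = ‖WithLp.toLp 2 v‖ := by
  simp [EuclideanSpace.norm_eq, euclNorm, dotProduct, sq]

lemma euclNorm_pos {v : Fin n → ℝ} (hv : v ≠ 0) : 0 < euclNorm v := by
  simpa [euclNorm_eq_norm] using hv

lemma euclNorm_mul_self (v : Fin n → ℝ) : euclNorm v * euclNorm v = v ⬝ᵥ v :=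
  Real.mul_self_sqrt (Finset.sum_nonneg fun _ _ => mul_self_nonneg _)

lemma dotProduct_le_euclNorm_mul (v w : Fin n → ℝ) : v ⬝ᵥ w ≤ euclNorm v * euclNorm w := by
  have h := real_inner_le_norm (WithLp.toLp 2 v) (WithLp.toLp 2 w)
  rw [euclNorm_eq_norm, euclNorm_eq_norm]
  convert h using 1
  simp [PiLp.inner_apply, dotProduct, mul_comm]

lemma dotProduct_neg_normalize_add_le (lam : ℝ) {g : Fin n → ℝ} (hg : g ≠ 0) (d : Fin n → ℝ) :
    g ⬝ᵥ ((-(lam / euclNorm g)) • g + d) ≤ (euclNorm d - lam) * euclNorm g := by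
  have hpos := euclNorm_pos hg
  have hfeedback : g ⬝ᵥ ((-(lam / euclNorm g)) • g) = -(lam * euclNorm g) := by
    rw [dotProduct_smul, ← euclNorm_mul_self, smul_eq_mul]
    field_simp
  rw [dotProduct_add, hfeedback]
  nlinarith [dotProduct_le_euclNorm_mul g d]

end EuclNorm

namespace Matrix

variable {K m n : Type*} [Field K] [Fintype m] [Fintype n] [DecidableEq n]

lemma isUnit_of_rank_eq_card {A : Matrix n n K} (h : A.rank = Fintype.card n) : IsUnit A := by
  rw [← mulVec_surjective_iff_isUnit]
  change Function.Surjective A.mulVecLin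
  rw [← LinearMap.range_eq_top]
  exact Submodule.eq_top_of_finrank_eq (by simpa [rank] using h)

lemma mul_transpose_mul_inv_eq_one [LinearOrder K] [IsStrictOrderedRing K] {A : Matrix n m K}
    (h : A.rank = Fintype.card n) : A * (Aᵀ * (A * Aᵀ)⁻¹) = 1 := by
  have hunit : IsUnit (A * Aᵀ) := isUnit_of_rank_eq_card (by rwa [rank_self_mul_transpose])
  rw [← Matrix.mul_assoc, mul_nonsing_inv _ ((isUnit_iff_isUnit_det _).mp hunit)]

lemma mulVec_transpose_mul_inv_mulVec [LinearOrder K] [IsStrictOrderedRing K] {A : Matrix n m K}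
    (h : A.rank = Fintype.card n) (v : n → K) : A *ᵥ ((Aᵀ * (A * Aᵀ)⁻¹) *ᵥ v) = v := by
  rw [mulVec_mulVec, mul_transpose_mul_inv_eq_one h, one_mulVec]

end Matrix

theorem stmt6_general {n m : ℕ} (gradV : (Fin n → ℝ) → Fin n → ℝ)
    (b : (Fin n → ℝ) → Matrix (Fin n) (Fin m) ℝ)
    (hrank : ∀ y, (b y).rank = n)
    (lam : ℝ) :
    ∀ (x : Fin n → ℝ) (d : Fin n → ℝ), gradV x ≠ 0 → euclNorm d < lam →
      letI ud : Fin m → ℝ := (-(lam / euclNorm (gradV x))) •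
        (((b x)ᵀ * (b x * (b x)ᵀ)⁻¹) *ᵥ gradV x)
      gradV x ⬝ᵥ (b x *ᵥ ud + d) ≤ (euclNorm d - lam) * euclNorm (gradV x) ∧
        (euclNorm d - lam) * euclNorm (gradV x) < 0 := by
  intro x d hg hd
  have hright_inv := mulVec_transpose_mul_inv_mulVec (by simpa using hrank x) (gradV x)
  refine ⟨?_, mul_neg_of_neg_of_pos (by linarith) (euclNorm_pos hg)⟩
  rw [mulVec_smul, hright_inv]
  exact dotProduct_neg_normalize_add_le lam hg d

/-- Nonlinear Lyapunov redesign inequality: with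
`u_d(x) = −(λ/|∇V(x)|) b(x)⁺ ∇V(x)`, for any `d` with `|d| < λ` and any `x`
with `∇V(x) ≠ 0`, `∇V(x)ᵀ(b(x)u_d(x) + d) ≤ (|d| − λ)|∇V(x)| < 0`. -/
theorem stmt6 {n m : ℕ} (V : (Fin n → ℝ) → ℝ) (gradV : (Fin n → ℝ) → Fin n → ℝ)
    (hVdiff : Differentiable ℝ V)
    (hgrad : ∀ y h, fderiv ℝ V y h = gradV y ⬝ᵥ h)
    (hVpos : V 0 = 0 ∧ ∀ y : Fin n → ℝ, y ≠ 0 → 0 < V y)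
    (b : (Fin n → ℝ) → Matrix (Fin n) (Fin m) ℝ)
    (hrank : ∀ y, (b y).rank = n)
    (lam : ℝ) (hlam : 0 < lam) :
    ∀ (x : Fin n → ℝ) (d : Fin n → ℝ), gradV x ≠ 0 → euclNorm d < lam →
      letI ud : Fin m → ℝ := (-(lam / euclNorm (gradV x))) •
        (((b x)ᵀ * (b x * (b x)ᵀ)⁻¹) *ᵥ gradV x)
      gradV x ⬝ᵥ (b x *ᵥ ud + d) ≤ (euclNorm d - lam) * euclNorm (gradV x) ∧
        (euclNorm d - lam) * euclNorm (gradV x) < 0 :=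
  stmt6_general gradV b hrank lam
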